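/- Let ℓ be a label anchored at p and let q = p + (d,0) with d > 0 be a point distinct from p. If q lies on the boundary of the rotated label ℓ(α), then α, taken modulo 2π, belongs to the set ℋ = {2π − arcsin(h_t/d), π + arcsin(h_t/d), arcsin(h_b/d), π − arcsin(h_b/d), 2π − arccos(w_r/d), arccos(w_r/d), π − arccos(w_l/d), π + arccos(w_l/d)}. -/

import Mathlib

/-!
The inverse rotation sends `q = p + (d, 0)` to `p + (d cos α, -d sin α)`, and a point lies on
the boundary of an axis-aligned rectangle only if one of its coordinates equals that of a side.
Hence `cos α ∈ {-w_l/d, w_r/d}` or `sin α ∈ {h_b/d, -h_t/d}`, and each of these equations has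
exactly the two solutions modulo `2π` listed in `ℋ`.
-/

open Real Set

/-- Rotation of the plane about the origin by angle `α` (counterclockwise). -/
noncomputable def rot (α : ℝ) (v : ℝ × ℝ) : ℝ × ℝ :=
  (v.1 * Real.cos α - v.2 * Real.sin α, v.1 * Real.sin α + v.2 * Real.cos α)

/-- The image of a set under rotation by `α` about the point `p`. -/
noncomputable def rotAbout (p : ℝ × ℝ) (α : ℝ) (s : Set (ℝ × ℝ)) : Set (ℝ × ℝ) :=
  (fun x => p + rot α (x - p)) '' s

/-- The closed axis-aligned rectangle containing its anchor point `p`, with distances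
`wl, wr, hb, ht` from `p` to the left, right, bottom and top sides. -/
noncomputable def rectLabel (p : ℝ × ℝ) (wl wr hb ht : ℝ) : Set (ℝ × ℝ) :=
  Set.Icc (p.1 - wl, p.2 - hb) (p.1 + wr, p.2 + ht)

theorem rot_neg_rot (α : ℝ) (v : ℝ × ℝ) : rot (-α) (rot α v) = v := by
  have h := sin_sq_add_cos_sq α
  simp only [rot, cos_neg, sin_neg, Prod.ext_iff]
  constructor
  · linear_combination v.1 * h
  · linear_combination v.2 * h

theorem rot_rot_neg (α : ℝ) (v : ℝ × ℝ) : rot α (rot (-α) v) = v := by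
  simpa using rot_neg_rot (-α) v

theorem continuous_rot (α : ℝ) : Continuous (rot α) := by
  unfold rot
  fun_prop

noncomputable def rotHomeo (p : ℝ × ℝ) (α : ℝ) : ℝ × ℝ ≃ₜ ℝ × ℝ where
  toFun x := p + rot α (x - p)
  invFun x := p + rot (-α) (x - p)
  left_inv x := by simp [rot_neg_rot]
  right_inv x := by simp [rot_rot_neg]
  continuous_toFun := by have := continuous_rot α; fun_prop
  continuous_invFun := by have := continuous_rot (-α); fun_prop

theorem mem_frontier_rotAbout {p q : ℝ × ℝ} {α : ℝ} {s : Set (ℝ × ℝ)} :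
    q ∈ frontier (rotAbout p α s) ↔ p + rot (-α) (q - p) ∈ frontier s := by
  rw [show rotAbout p α s = rotHomeo p α '' s from rfl, ← Homeomorph.image_frontier,
    Homeomorph.image_eq_preimage_symm]
  rfl

theorem eq_or_eq_of_mem_frontier_Icc {a b x : ℝ} (hx : x ∈ frontier (Icc a b)) :
    x = a ∨ x = b := by
  by_cases hab : a ≤ b
  · rwa [frontier_Icc hab] at hx
  · rw [Icc_eq_empty hab, frontier_empty] at hx
    exact hx.elim

theorem coord_eq_of_mem_frontier_Icc {a b x : ℝ × ℝ} (hx : x ∈ frontier (Icc a b)) :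
    x.1 = a.1 ∨ x.1 = b.1 ∨ x.2 = a.2 ∨ x.2 = b.2 := by
  rw [Icc_prod_eq, frontier_prod_eq] at hx
  rcases hx with ⟨-, hx⟩ | ⟨hx, -⟩
  · rcases eq_or_eq_of_mem_frontier_Icc hx with h | h <;> simp [h]
  · rcases eq_or_eq_of_mem_frontier_Icc hx with h | h <;> simp [h]

theorem cos_or_sin_eq_of_mem_frontier_rotAbout_rectLabel {p : ℝ × ℝ} {d wl wr hb ht α : ℝ}
    (hd : d ≠ 0) (hq : p + (d, 0) ∈ frontier (rotAbout p α (rectLabel p wl wr hb ht))) :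
    cos α = -(wl / d) ∨ cos α = wr / d ∨ sin α = hb / d ∨ sin α = -(ht / d) := by
  rw [mem_frontier_rotAbout, rectLabel] at hq
  rcases coord_eq_of_mem_frontier_Icc hq with h | h | h | h <;>
    simp only [add_sub_cancel_left, rot, cos_neg, sin_neg, Prod.fst_add, Prod.snd_add] at h
  · left; field_simp; linarith
  · right; left; field_simp; linarith
  · right; right; left; field_simp; linarith
  · right; right; right; field_simp; linarith

namespace Real.Angle

theorem coe_eq_arccos_or_two_pi_sub_arccos {α c : ℝ} (h : Real.cos α = c) :
    (α : Angle) = (arccos c : ℝ) ∨ (α : Angle) = (2 * π - arccos c : ℝ) := by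
  have hc : Real.cos (arccos c) = c := by
    rw [← h, cos_arccos (neg_one_le_cos α) (cos_le_one α)]
  rw [coe_sub, coe_two_pi, zero_sub, ← cos_eq_iff_eq_or_eq_neg, cos_coe, cos_coe, hc, h]

theorem coe_eq_arcsin_or_pi_sub_arcsin {α s : ℝ} (h : Real.sin α = s) :
    (α : Angle) = (arcsin s : ℝ) ∨ (α : Angle) = (π - arcsin s : ℝ) := by
  have hs : Real.sin (arcsin s) = s := by
    rw [← h, sin_arcsin (neg_one_le_sin α) (sin_le_one α)]
  rw [coe_sub, eq_sub_iff_add_eq, ← sin_eq_iff_eq_or_add_eq_pi, sin_coe, sin_coe, hs, h]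

theorem coe_eq_pi_sub_arccos_or_pi_add_arccos {α c : ℝ} (h : Real.cos α = -c) :
    (α : Angle) = (π - arccos c : ℝ) ∨ (α : Angle) = (π + arccos c : ℝ) := by
  rcases coe_eq_arccos_or_two_pi_sub_arccos h with h' | h' <;> rw [h', arccos_neg]
  · exact Or.inl rfl
  · right
    congr 1
    ring

theorem coe_eq_two_pi_sub_arcsin_or_pi_add_arcsin {α s : ℝ} (h : Real.sin α = -s) :
    (α : Angle) = (2 * π - arcsin s : ℝ) ∨ (α : Angle) = (π + arcsin s : ℝ) := by
  rcases coe_eq_arcsin_or_pi_sub_arcsin h with h' | h' <;> rw [h', arcsin_neg]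
  · left
    rw [angle_eq_iff_two_pi_dvd_sub]
    exact ⟨-1, by ring⟩
  · right
    rw [sub_neg_eq_add]

end Real.Angle

theorem hard_conflict_event_mem_general
    (p : ℝ × ℝ) (d : ℝ) (hd : 0 < d)
    (wl wr hb ht : ℝ)
    (α : ℝ)
    (hq : p + (d, 0) ∈ frontier (rotAbout p α (rectLabel p wl wr hb ht))) :
    (α : Real.Angle) ∈ (fun x : ℝ => (x : Real.Angle)) ''
      ({2 * π - Real.arcsin (ht / d), π + Real.arcsin (ht / d),
        Real.arcsin (hb / d), π - Real.arcsin (hb / d),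
        2 * π - Real.arccos (wr / d), Real.arccos (wr / d),
        π - Real.arccos (wl / d), π + Real.arccos (wl / d)} : Set ℝ) := by
  rcases cos_or_sin_eq_of_mem_frontier_rotAbout_rectLabel hd.ne' hq with h | h | h | h
  · rcases Real.Angle.coe_eq_pi_sub_arccos_or_pi_add_arccos h with h' | h' <;>
      exact ⟨_, by simp, h'.symm⟩
  · rcases Real.Angle.coe_eq_arccos_or_two_pi_sub_arccos h with h' | h' <;>
      exact ⟨_, by simp, h'.symm⟩
  · rcases Real.Angle.coe_eq_arcsin_or_pi_sub_arcsin h with h' | h' <;>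
      exact ⟨_, by simp, h'.symm⟩
  · rcases Real.Angle.coe_eq_two_pi_sub_arcsin_or_pi_add_arcsin h with h' | h' <;>
      exact ⟨_, by simp, h'.symm⟩

/-- If the point `q = p + (d,0)` lies on the boundary of the rotated label `ℓ(α)`, then
`α` modulo `2π` belongs to the eight-element set `ℋ` of hard conflict events. -/
theorem hard_conflict_event_mem
    (p : ℝ × ℝ) (d : ℝ) (hd : 0 < d)
    (wl wr hb ht : ℝ)
    (hwl : 0 ≤ wl) (hwr : 0 ≤ wr) (hhb : 0 ≤ hb) (hht : 0 ≤ ht)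
    (hw : 0 < wl + wr) (hh : 0 < hb + ht)
    (α : ℝ)
    (hq : p + (d, 0) ∈ frontier (rotAbout p α (rectLabel p wl wr hb ht))) :
    (α : Real.Angle) ∈ (fun x : ℝ => (x : Real.Angle)) ''
      ({2 * π - Real.arcsin (ht / d), π + Real.arcsin (ht / d),
        Real.arcsin (hb / d), π - Real.arcsin (hb / d),
        2 * π - Real.arccos (wr / d), Real.arccos (wr / d),
        π - Real.arccos (wl / d), π + Real.arccos (wl / d)} : Set ℝ) :=
  hard_conflict_event_mem_general p d hd wl wr hb ht α hq
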